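/- Let f ∈ L²(ℝ) with ‖f‖₂ = 1, let ρ = |f⟩⟨f| be the corresponding pure state, and let T = max_{(x,ω)∈ℝ²} |Vf(x,ω)|². Then: (i) D[ρ] = 2√(1 − T); (ii) the quantity D[f] := inf{ ‖f − c φ_{(x₀,ω₀)}‖₂ : (x₀,ω₀) ∈ ℝ², c ∈ ℂ, |c| = 1 } satisfies D[f] = √(2(1 − √T)); and (iii) consequently (1/2) D[ρ] ≤ D[f] ≤ (1/√2) D[ρ]. -/

import Mathlib

/-!
For unit vectors `f, g` whose phases are aligned so that `⟪f, g⟫ = t ≥ 0`, the vectors `f + g`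
and `f - g` are orthogonal and `2 (|f⟩⟨f| - |g⟩⟨g|) = |f + g⟩⟨f - g| + |f - g⟩⟨f + g|`.
For `a ⟂ b` the operator `|a⟩⟨b| + |b⟩⟨a|` has trace norm `2 ‖a‖ ‖b‖`: Cauchy–Schwarz and
Bessel bound every sum `∑ |⟪e i, A (g i)⟫|` by it, and the normalized pair `(a, b)` tested
against `(b, a)` attains it. Hence `‖|f⟩⟨f| - |g⟩⟨g|‖_{S¹} = ‖f + g‖ ‖f - g‖ = 2 √(1 - t²)`,
while `min_{|c| = 1} ‖f - c g‖ = √(2 - 2 t)`. Both are continuous decreasing functions of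
`t² = |Vf(z)|²`, so their infima over `z` are these functions evaluated at `T = sup |Vf|²`.
-/

open MeasureTheory Complex

noncomputable section

/-- The coherent state `φ_{(x₀,ω₀)}(x) = e^{2πiω₀x} 2^{1/4} e^{-π(x-x₀)²}` as a plain function. -/
def coherentFun (z : ℝ × ℝ) : ℝ → ℂ := fun x =>
  Complex.exp (((2 * Real.pi * z.2 * x : ℝ) : ℂ) * Complex.I) *
    (((2 : ℝ) ^ ((1 : ℝ) / 4) * Real.exp (-Real.pi * (x - z.1) ^ 2) : ℝ) : ℂ)

lemma coherentFun_continuous (z : ℝ × ℝ) : Continuous (coherentFun z) := by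
  unfold coherentFun; fun_prop

lemma coherentFun_memℒp (z : ℝ × ℝ) : MemLp (coherentFun z) 2 (volume : Measure ℝ) := by
  rw [memLp_two_iff_integrable_sq_norm (coherentFun_continuous z).aestronglyMeasurable]
  have heq : (fun x => ‖coherentFun z x‖ ^ 2) =
      fun x => Real.sqrt 2 * Real.exp (-(2 * Real.pi) * (x - z.1) ^ 2) := by
    funext x
    have h1 : ‖coherentFun z x‖ =
        (2 : ℝ) ^ ((1 : ℝ) / 4) * Real.exp (-Real.pi * (x - z.1) ^ 2) := by
      unfold coherentFun
      rw [norm_mul, Complex.norm_exp_ofReal_mul_I, one_mul,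
        Complex.norm_real, Real.norm_eq_abs, _root_.abs_of_nonneg (by positivity)]
    rw [h1, mul_pow, ← Real.exp_nat_mul,
      ← Real.rpow_natCast ((2:ℝ) ^ ((1:ℝ)/4)) 2, ← Real.rpow_mul (by norm_num),
      Real.sqrt_eq_rpow]
    norm_num
    ring_nf
  rw [heq]
  exact ((integrable_exp_neg_mul_sq (by positivity)).comp_sub_right z.1).const_mul _

/-- The Hilbert space `L²(ℝ)`. -/
abbrev HS : Type := Lp ℂ 2 (volume : Measure ℝ)

/-- The coherent state `φ_{(x₀,ω₀)}` as an element of `L²(ℝ)`. -/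
def coherent (z : ℝ × ℝ) : HS := (coherentFun_memℒp z).toLp (coherentFun z)

/-- The rank-one operator `|f⟩⟨f| : g ↦ ⟨f,g⟩ f`. -/
def rankOne {E : Type*} [NormedAddCommGroup E] [InnerProductSpace ℂ E] (f : E) : E →L[ℂ] E :=
  (innerSL ℂ f).smulRight f

/-- The trace norm (sum of singular values) of an operator, characterized as the supremum
over finite orthonormal families `(e_i)`, `(g_i)` of `∑ i |⟨e_i, A g_i⟩|`. -/
def traceNorm {E : Type*} [NormedAddCommGroup E] [InnerProductSpace ℂ E]
    (A : E →L[ℂ] E) : ℝ :=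
  ⨆ p : {p : Σ n : ℕ, (Fin n → E) × (Fin n → E) // Orthonormal ℂ p.2.1 ∧ Orthonormal ℂ p.2.2},
    ∑ i, ‖(inner ℂ (p.1.2.1 i) (A (p.1.2.2 i)) : ℂ)‖

/-- The Husimi function `u_ρ(x,ω) = ⟨φ_{(x,ω)}, ρ φ_{(x,ω)}⟩` of an operator on `L²(ℝ)`. -/
def husimi (ρ : HS →L[ℂ] HS) (z : ℝ × ℝ) : ℝ := (inner ℂ (coherent z) (ρ (coherent z)) : ℂ).re

/-- `ρ` is a density matrix: a positive (trace-class) operator with `Tr ρ = 1`. -/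
def IsDensityMatrix (ρ : HS →L[ℂ] HS) : Prop :=
  ρ.IsPositive ∧ ∀ e : HilbertBasis ℕ ℂ HS, ∑' n, ((inner ℂ (e n) (ρ (e n)) : ℂ)).re = 1

/-- `D[ρ]`: the infimum of trace-norm distances of `ρ` to coherent-state projections. -/
def Ddist (ρ : HS →L[ℂ] HS) : ℝ := ⨅ z : ℝ × ℝ, traceNorm (ρ - rankOne (coherent z))

/-- `D[f]`: the `L²`-distance of `f` to the coherent states multiplied by unimodular
constants. -/
def Dpure (f : HS) : ℝ :=
  ⨅ p : (ℝ × ℝ) × {c : ℂ // ‖c‖ = 1}, ‖f - (p.2 : ℂ) • coherent p.1‖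

open scoped InnerProductSpace

lemma norm_coherentFun_sq (z : ℝ × ℝ) (x : ℝ) :
    ‖coherentFun z x‖ ^ 2 = √2 * Real.exp (-(2 * Real.pi) * (x - z.1) ^ 2) := by
  rw [coherentFun, norm_mul, Complex.norm_exp_ofReal_mul_I, one_mul, Complex.norm_real,
    Real.norm_of_nonneg (by positivity), mul_pow, ← Real.rpow_natCast, ← Real.rpow_mul two_pos.le,
    ← Real.exp_nat_mul, Real.sqrt_eq_rpow]
  norm_num
  ring

lemma integral_norm_coherentFun_sq (z : ℝ × ℝ) : ∫ x, ‖coherentFun z x‖ ^ 2 = 1 := by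
  simp_rw [norm_coherentFun_sq, integral_const_mul,
    integral_sub_right_eq_self (fun x => Real.exp (-(2 * Real.pi) * x ^ 2)), integral_gaussian,
    ← Real.sqrt_mul two_pos.le]
  rw [show 2 * (Real.pi / (2 * Real.pi)) = 1 by field_simp, Real.sqrt_one]

lemma norm_coherent (z : ℝ × ℝ) : ‖coherent z‖ = 1 := by
  have hae : (coherent z : ℝ → ℂ) =ᵐ[volume] coherentFun z := (coherentFun_memℒp z).coeFn_toLp
  have hinner : ⟪coherent z, coherent z⟫_ℂ = ((∫ x, ‖coherentFun z x‖ ^ 2 : ℝ) : ℂ) := by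
    rw [L2.inner_def, ← integral_complex_ofReal]
    refine integral_congr_ae ?_
    filter_upwards [hae] with x hx
    simp [hx, inner_self_eq_norm_sq_to_K]
  have hsq : ‖coherent z‖ ^ 2 = 1 := by
    rw [@norm_sq_eq_re_inner ℂ, hinner, integral_norm_coherentFun_sq]
    simp
  exact (pow_eq_one_iff_of_nonneg (norm_nonneg _) two_ne_zero).1 hsq

section PureStates

variable {E : Type*} [NormedAddCommGroup E] [InnerProductSpace ℂ E]

lemma rankOne_def (f : E) : rankOne f = InnerProductSpace.rankOne ℂ f f := rfl

lemma rankOne_smul_of_norm_eq_one {c : ℂ} (hc : ‖c‖ = 1) (f : E) :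
    rankOne (c • f) = rankOne f := by
  ext x
  simp only [rankOne_def, InnerProductSpace.rankOne_apply, inner_smul_left, smul_smul]
  rw [mul_right_comm, Complex.conj_mul', hc]
  simp

lemma Orthonormal.sum_norm_inner_mul_norm_inner_le {ι : Type*} [Fintype ι] {e g : ι → E}
    (he : Orthonormal ℂ e) (hg : Orthonormal ℂ g) (a b : E) :
    ∑ i, ‖⟪e i, a⟫_ℂ‖ * ‖⟪b, g i⟫_ℂ‖ ≤ ‖a‖ * ‖b‖ :=
  calc ∑ i, ‖⟪e i, a⟫_ℂ‖ * ‖⟪b, g i⟫_ℂ‖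
      ≤ √(∑ i, ‖⟪e i, a⟫_ℂ‖ ^ 2) * √(∑ i, ‖⟪g i, b⟫_ℂ‖ ^ 2) := by
        simp_rw [norm_inner_symm b]
        exact Real.sum_mul_le_sqrt_mul_sqrt _ _ _
    _ ≤ √(‖a‖ ^ 2) * √(‖b‖ ^ 2) := by
        gcongr
        exacts [Orthonormal.sum_inner_products_le a he, Orthonormal.sum_inner_products_le b hg]
    _ = ‖a‖ * ‖b‖ := by simp only [Real.sqrt_sq (norm_nonneg _)]

lemma Orthonormal.sum_norm_inner_rankOne_le {ι : Type*} [Fintype ι] {e g : ι → E}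
    (he : Orthonormal ℂ e) (hg : Orthonormal ℂ g) (a b : E) :
    ∑ i, ‖⟪e i, InnerProductSpace.rankOne ℂ a b (g i)⟫_ℂ‖ ≤ ‖a‖ * ‖b‖ := by
  simp only [InnerProductSpace.rankOne_apply, inner_smul_right, norm_mul, mul_comm ‖⟪b, _⟫_ℂ‖]
  exact he.sum_norm_inner_mul_norm_inner_le hg a b

lemma orthonormal_normalize_pair {a b : E} (ha : a ≠ 0) (hb : b ≠ 0) (hab : ⟪a, b⟫_ℂ = 0) :
    Orthonormal ℂ ![(‖a‖⁻¹ : ℂ) • a, (‖b‖⁻¹ : ℂ) • b] := by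
  have hba : ⟪b, a⟫_ℂ = 0 := inner_eq_zero_symm.1 hab
  refine ⟨Fin.forall_fin_two.2 ⟨norm_smul_inv_norm ha, norm_smul_inv_norm hb⟩, ?_⟩
  intro i j hij
  fin_cases i <;> fin_cases j <;> simp_all [inner_smul_left, inner_smul_right]

lemma traceNorm_nonneg (A : E →L[ℂ] E) : 0 ≤ traceNorm A :=
  Real.iSup_nonneg fun _ => Finset.sum_nonneg fun _ _ => norm_nonneg _

lemma traceNorm_le {A : E →L[ℂ] E} {C : ℝ}
    (hA : ∀ (n : ℕ) (e g : Fin n → E), Orthonormal ℂ e → Orthonormal ℂ g →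
      ∑ i, ‖⟪e i, A (g i)⟫_ℂ‖ ≤ C) :
    traceNorm A ≤ C := by
  have hempty : Orthonormal ℂ (Fin.elim0 : Fin 0 → E) := ⟨fun i => i.elim0, fun i => i.elim0⟩
  have := Nonempty.intro (⟨⟨0, Fin.elim0, Fin.elim0⟩, hempty, hempty⟩ :
    {p : Σ n : ℕ, (Fin n → E) × (Fin n → E) // Orthonormal ℂ p.2.1 ∧ Orthonormal ℂ p.2.2})
  exact ciSup_le fun ⟨⟨n, e, g⟩, he, hg⟩ => hA n e g he hg

lemma sum_le_traceNorm {A : E →L[ℂ] E} {C : ℝ}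
    (hA : ∀ (n : ℕ) (e g : Fin n → E), Orthonormal ℂ e → Orthonormal ℂ g →
      ∑ i, ‖⟪e i, A (g i)⟫_ℂ‖ ≤ C)
    {n : ℕ} {e g : Fin n → E} (he : Orthonormal ℂ e) (hg : Orthonormal ℂ g) :
    ∑ i, ‖⟪e i, A (g i)⟫_ℂ‖ ≤ traceNorm A :=
  le_ciSup (f := fun p : {p : Σ n : ℕ, (Fin n → E) × (Fin n → E) //
      Orthonormal ℂ p.2.1 ∧ Orthonormal ℂ p.2.2} => ∑ i, ‖⟪p.1.2.1 i, A (p.1.2.2 i)⟫_ℂ‖)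
    ⟨C, Set.forall_mem_range.2 fun ⟨⟨n, e, g⟩, he, hg⟩ => hA n e g he hg⟩ ⟨⟨n, e, g⟩, he, hg⟩

lemma traceNorm_ofReal_smul {r : ℝ} (hr : 0 ≤ r) (A : E →L[ℂ] E) :
    traceNorm ((r : ℂ) • A) = r * traceNorm A := by
  simp only [traceNorm, Real.mul_iSup_of_nonneg hr, Finset.mul_sum,
    FunLike.coe_smul, Pi.smul_apply, inner_smul_right, norm_mul, Complex.norm_real,
    Real.norm_of_nonneg hr]

lemma traceNorm_rankOne_add_rankOne_of_inner_eq_zero {a b : E} (hab : ⟪a, b⟫_ℂ = 0) :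
    traceNorm (InnerProductSpace.rankOne ℂ a b + InnerProductSpace.rankOne ℂ b a) =
      2 * (‖a‖ * ‖b‖) := by
  set A := InnerProductSpace.rankOne ℂ a b + InnerProductSpace.rankOne ℂ b a
  have hsum : ∀ (n : ℕ) (e g : Fin n → E), Orthonormal ℂ e → Orthonormal ℂ g →
      ∑ i, ‖⟪e i, A (g i)⟫_ℂ‖ ≤ 2 * (‖a‖ * ‖b‖) := by
    intro n e g he hg
    calc ∑ i, ‖⟪e i, A (g i)⟫_ℂ‖
        ≤ ∑ i, (‖⟪e i, InnerProductSpace.rankOne ℂ a b (g i)⟫_ℂ‖ +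
            ‖⟪e i, InnerProductSpace.rankOne ℂ b a (g i)⟫_ℂ‖) := by
          gcongr with i
          rw [add_apply, inner_add_right]
          exact norm_add_le _ _
      _ ≤ ‖a‖ * ‖b‖ + ‖b‖ * ‖a‖ := by
          rw [Finset.sum_add_distrib]
          exact add_le_add (he.sum_norm_inner_rankOne_le hg a b)
            (he.sum_norm_inner_rankOne_le hg b a)
      _ = 2 * (‖a‖ * ‖b‖) := by ring
  refine le_antisymm (traceNorm_le hsum) ?_
  rcases eq_or_ne a 0 with rfl | ha
  · simpa using traceNorm_nonneg A
  rcases eq_or_ne b 0 with rfl | hb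
  · simpa using traceNorm_nonneg A
  have hba : ⟪b, a⟫_ℂ = 0 := inner_eq_zero_symm.1 hab
  calc 2 * (‖a‖ * ‖b‖)
      = ∑ i, ‖⟪![(‖a‖⁻¹ : ℂ) • a, (‖b‖⁻¹ : ℂ) • b] i,
          A (![(‖b‖⁻¹ : ℂ) • b, (‖a‖⁻¹ : ℂ) • a] i)⟫_ℂ‖ := by
        have ha' : ‖a‖ ≠ 0 := norm_ne_zero_iff.2 ha
        have hb' : ‖b‖ ≠ 0 := norm_ne_zero_iff.2 hb
        simp only [A, Fin.sum_univ_two, Matrix.cons_val_zero, Matrix.cons_val_one,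
          Matrix.cons_val_fin_one, add_apply, InnerProductSpace.rankOne_apply, inner_add_right,
          inner_smul_left, inner_smul_right, inner_self_eq_norm_sq_to_K, hab, hba]
        simp only [mul_zero, add_zero, zero_add, norm_mul, norm_inv, norm_pow, Complex.norm_conj,
          Complex.norm_real, norm_norm, RCLike.norm_ofReal, abs_norm]
        field_simp
        ring
    _ ≤ traceNorm A := sum_le_traceNorm hsum (orthonormal_normalize_pair ha hb hab)
        (orthonormal_normalize_pair hb ha hba)

lemma two_smul_rankOne_sub_rankOne (f g : E) :
    (2 : ℂ) • (rankOne f - rankOne g) = InnerProductSpace.rankOne ℂ (f + g) (f - g) +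
      InnerProductSpace.rankOne ℂ (f - g) (f + g) := by
  ext x
  simp only [rankOne_def, smul_apply, sub_apply, add_apply,
    InnerProductSpace.rankOne_apply, inner_add_left, inner_sub_left]
  module

lemma traceNorm_rankOne_sub_rankOne_of_inner_add_sub_eq_zero {f g : E}
    (h : ⟪f + g, f - g⟫_ℂ = 0) :
    traceNorm (rankOne f - rankOne g) = ‖f + g‖ * ‖f - g‖ := by
  have h2 := traceNorm_ofReal_smul two_pos.le (rankOne f - rankOne g)
  rw [Complex.ofReal_ofNat, two_smul_rankOne_sub_rankOne,
    traceNorm_rankOne_add_rankOne_of_inner_eq_zero h] at h2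
  linarith

lemma traceNorm_rankOne_sub_rankOne_of_inner_eq_ofReal {f g : E} (hf : ‖f‖ = 1)
    (hg : ‖g‖ = 1) {t : ℝ} (ht : ⟪f, g⟫_ℂ = t) :
    traceNorm (rankOne f - rankOne g) = 2 * √(1 - t ^ 2) := by
  have hgf : ⟪g, f⟫_ℂ = t := by rw [← inner_conj_symm, ht, Complex.conj_ofReal]
  have horth : ⟪f + g, f - g⟫_ℂ = 0 := by
    rw [inner_add_left, inner_sub_right, inner_sub_right, ht, hgf, inner_self_eq_norm_sq_to_K,
      inner_self_eq_norm_sq_to_K, hf, hg]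
    ring
  have hadd : ‖f + g‖ ^ 2 = 2 + 2 * t := by
    rw [@norm_add_sq ℂ, ht, hf, hg, RCLike.re_to_complex, Complex.ofReal_re]; ring
  have hsub : ‖f - g‖ ^ 2 = 2 - 2 * t := by
    rw [@norm_sub_sq ℂ, ht, hf, hg, RCLike.re_to_complex, Complex.ofReal_re]; ring
  rw [traceNorm_rankOne_sub_rankOne_of_inner_add_sub_eq_zero horth,
    ← Real.sqrt_sq (mul_nonneg (norm_nonneg (f + g)) (norm_nonneg (f - g))), mul_pow, hadd, hsub,
    show (2 + 2 * t) * (2 - 2 * t) = 2 ^ 2 * (1 - t ^ 2) by ring,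
    Real.sqrt_mul (by positivity), Real.sqrt_sq two_pos.le]

lemma exists_norm_eq_one_inner_smul_eq_norm (f g : E) :
    ∃ c : ℂ, ‖c‖ = 1 ∧ ⟪f, c • g⟫_ℂ = ‖⟪f, g⟫_ℂ‖ := by
  obtain ⟨c, hc, h⟩ := Complex.exists_norm_eq_mul_self ⟪f, g⟫_ℂ
  exact ⟨c, hc, by rw [inner_smul_right, h]⟩

theorem traceNorm_rankOne_sub_rankOne {f g : E} (hf : ‖f‖ = 1) (hg : ‖g‖ = 1) :
    traceNorm (rankOne f - rankOne g) = 2 * √(1 - ‖⟪f, g⟫_ℂ‖ ^ 2) := by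
  obtain ⟨c, hc, hfc⟩ := exists_norm_eq_one_inner_smul_eq_norm f g
  rw [← rankOne_smul_of_norm_eq_one hc g]
  exact traceNorm_rankOne_sub_rankOne_of_inner_eq_ofReal hf (by rw [norm_smul, hc, hg, one_mul]) hfc

lemma norm_sub_smul_sq {f g : E} (hf : ‖f‖ = 1) (hg : ‖g‖ = 1) {c : ℂ} (hc : ‖c‖ = 1) :
    ‖f - c • g‖ ^ 2 = 2 - 2 * (⟪f, c • g⟫_ℂ).re := by
  rw [@norm_sub_sq ℂ, norm_smul, hc, hf, hg, RCLike.re_to_complex]; ring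

instance : Nonempty {c : ℂ // ‖c‖ = 1} := ⟨⟨1, norm_one⟩⟩

theorem ciInf_norm_sub_smul {f g : E} (hf : ‖f‖ = 1) (hg : ‖g‖ = 1) :
    ⨅ c : {c : ℂ // ‖c‖ = 1}, ‖f - (c : ℂ) • g‖ = √(2 - 2 * ‖⟪f, g⟫_ℂ‖) := by
  refine IsGLB.ciInf_eq (IsLeast.isGLB ⟨?_, ?_⟩)
  · obtain ⟨c, hc, hfc⟩ := exists_norm_eq_one_inner_smul_eq_norm f g
    have hsq : ‖f - c • g‖ ^ 2 = 2 - 2 * ‖⟪f, g⟫_ℂ‖ := by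
      rw [norm_sub_smul_sq hf hg hc, hfc, Complex.ofReal_re]
    exact ⟨⟨c, hc⟩, by rw [← hsq, Real.sqrt_sq (norm_nonneg _)]⟩
  · rintro _ ⟨⟨c, hc⟩, rfl⟩
    have hre : (⟪f, c • g⟫_ℂ).re ≤ ‖⟪f, g⟫_ℂ‖ := by
      calc (⟪f, c • g⟫_ℂ).re ≤ ‖⟪f, c • g⟫_ℂ‖ := Complex.re_le_norm _
        _ = ‖⟪f, g⟫_ℂ‖ := by rw [inner_smul_right, norm_mul, hc, one_mul]
    rw [Real.sqrt_le_left (norm_nonneg _), norm_sub_smul_sq hf hg hc]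
    linarith

lemma norm_inner_sq_le_one {u v : E} (hu : ‖u‖ = 1) (hv : ‖v‖ = 1) : ‖⟪u, v⟫_ℂ‖ ^ 2 ≤ 1 :=
  pow_le_one₀ (norm_nonneg _) (by simpa [hu, hv] using norm_inner_le_norm (𝕜 := ℂ) u v)

section Family

variable {ι : Type*} {φ : ι → E} {f : E}

lemma bddAbove_range_norm_inner_sq (hφ : ∀ i, ‖φ i‖ = 1) (hf : ‖f‖ = 1) :
    BddAbove (Set.range fun i => ‖⟪φ i, f⟫_ℂ‖ ^ 2) :=
  ⟨1, Set.forall_mem_range.2 fun i => norm_inner_sq_le_one (hφ i) hf⟩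

theorem ciInf_traceNorm_rankOne_sub_rankOne [Nonempty ι] (hφ : ∀ i, ‖φ i‖ = 1) (hf : ‖f‖ = 1) :
    ⨅ i, traceNorm (rankOne f - rankOne (φ i)) = 2 * √(1 - ⨆ i, ‖⟪φ i, f⟫_ℂ‖ ^ 2) := by
  rw [Antitone.map_ciSup_of_continuousAt (f := fun x : ℝ => 2 * √(1 - x)) (by fun_prop)
    (fun x y hxy => by dsimp only; gcongr) (bddAbove_range_norm_inner_sq hφ hf)]
  simp_rw [traceNorm_rankOne_sub_rankOne hf (hφ _), norm_inner_symm]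

theorem ciInf_norm_sub_smul_prod [Nonempty ι] (hφ : ∀ i, ‖φ i‖ = 1) (hf : ‖f‖ = 1) :
    ⨅ p : ι × {c : ℂ // ‖c‖ = 1}, ‖f - (p.2 : ℂ) • φ p.1‖ =
      √(2 * (1 - √(⨆ i, ‖⟪φ i, f⟫_ℂ‖ ^ 2))) := by
  rw [ciInf_prod ⟨0, Set.forall_mem_range.2 fun _ => norm_nonneg _⟩,
    Antitone.map_ciSup_of_continuousAt (f := fun x : ℝ => √(2 * (1 - √x))) (by fun_prop)
      (fun x y hxy => by dsimp only; gcongr) (bddAbove_range_norm_inner_sq hφ hf)]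
  simp_rw [ciInf_norm_sub_smul hf (hφ _), norm_inner_symm, Real.sqrt_sq (norm_nonneg _), mul_sub,
    mul_one]

end Family

end PureStates

lemma sqrt_one_sub_le_sqrt_two_mul_one_sub_sqrt {T : ℝ} (h0 : 0 ≤ T) (h1 : T ≤ 1) :
    √(1 - T) ≤ √(2 * (1 - √T)) ∧ √(2 * (1 - √T)) ≤ √2 * √(1 - T) := by
  obtain ⟨a, ha0, rfl⟩ : ∃ a, 0 ≤ a ∧ a ^ 2 = T := ⟨√T, Real.sqrt_nonneg _, Real.sq_sqrt h0⟩
  have ha1 : a ≤ 1 := by nlinarith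
  rw [Real.sqrt_sq ha0, ← Real.sqrt_mul two_pos.le]
  constructor <;> apply Real.sqrt_le_sqrt <;> nlinarith

/-- For a pure state `ρ = |f⟩⟨f|` with `T = max |Vf|²` one has `D[ρ] = 2√(1−T)`,
`D[f] = √(2(1−√T))`, and consequently `(1/2) D[ρ] ≤ D[f] ≤ (1/√2) D[ρ]`. -/
theorem pure_state_distance_formulas (f : HS) (hf : ‖f‖ = 1) :
    Ddist (rankOne f) =
      2 * Real.sqrt (1 - ⨆ z : ℝ × ℝ, ‖(inner ℂ (coherent z) f : ℂ)‖ ^ 2) ∧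
    Dpure f =
      Real.sqrt (2 * (1 - Real.sqrt (⨆ z : ℝ × ℝ, ‖(inner ℂ (coherent z) f : ℂ)‖ ^ 2))) ∧
    (1 / 2) * Ddist (rankOne f) ≤ Dpure f ∧
    Dpure f ≤ (1 / Real.sqrt 2) * Ddist (rankOne f) := by
  have hD := ciInf_traceNorm_rankOne_sub_rankOne norm_coherent hf
  have hP := ciInf_norm_sub_smul_prod norm_coherent hf
  have hT0 : 0 ≤ ⨆ z : ℝ × ℝ, ‖⟪coherent z, f⟫_ℂ‖ ^ 2 := Real.iSup_nonneg fun _ => sq_nonneg _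
  have hT1 : ⨆ z : ℝ × ℝ, ‖⟪coherent z, f⟫_ℂ‖ ^ 2 ≤ 1 :=
    ciSup_le fun z => norm_inner_sq_le_one (norm_coherent z) hf
  obtain ⟨hlower, hupper⟩ := sqrt_one_sub_le_sqrt_two_mul_one_sub_sqrt hT0 hT1
  refine ⟨hD, hP, ?_, ?_⟩ <;> rw [Ddist, Dpure, hD, hP]
  · linarith
  · rwa [one_div, ← mul_assoc, inv_mul_eq_div, Real.div_sqrt]
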